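/- The number of plane forests with ranked roots having empirical children distribution s = (s_i : i ≥ 0), where the forest has z = Σ_i s_i − Σ_i i·s_i roots and m = Σ_i s_i vertices total, equals z·(m−1)!/∏_{i≥0} s_i!. -/

import Mathlib

open scoped BigOperators Classical
open Filter MeasureTheory

namespace Paper

inductive PlaneTree : Type
  | node : List PlaneTree → PlaneTree

namespace PlaneTree

def deg : PlaneTree → ℕ
  | node ts => ts.length

mutual
  def pos : PlaneTree → List (List ℕ)
    | node ts => [] :: posF 0 ts
  def posF : ℕ → List PlaneTree → List (List ℕ)
    | _, [] => []
    | i, t :: ts => (pos t).map (fun q => i :: q) ++ posF (i + 1) ts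
end

mutual
  def dfsDeg : PlaneTree → List ℕ
    | node ts => ts.length :: dfsDegF ts
  def dfsDegF : List PlaneTree → List ℕ
    | [] => []
    | t :: ts => dfsDeg t ++ dfsDegF ts
end

def subtreeAt : PlaneTree → List ℕ → Option PlaneTree
  | t, [] => some t
  | node ts, i :: p =>
    match ts[i]? with
    | some t' => subtreeAt t' p
    | none => none

def numChild (t : PlaneTree) (p : List ℕ) : ℕ := ((subtreeAt t p).map deg).getD 0

def IsVertex (t : PlaneTree) (p : List ℕ) : Prop := (subtreeAt t p).isSome

def IsLeaf (t : PlaneTree) (p : List ℕ) : Prop := (subtreeAt t p).isSome ∧ numChild t p = 0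

/-- number of vertices of `t` having exactly `i` children (empirical children distribution) -/
def ecd (t : PlaneTree) (i : ℕ) : ℕ :=
  ((pos t).filter fun p => decide (numChild t p = i)).length

/-- ECD of a plane forest with ranked roots -/
def ecdF (f : List PlaneTree) (i : ℕ) : ℕ := (f.map fun t => ecd t i).sum

/-- number of children of the `j`-th root of a forest -/
def rootDeg (f : List PlaneTree) (j : ℕ) : ℕ := deg (f.getD j (node []))

/-- the set of plane forests with ranked roots with ECD `s` -/
def forestSet (s : ℕ → ℕ) : Set (List PlaneTree) := {f | ∀ i, ecdF f i = s i}

/-- the set of plane trees with ECD `s` -/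
def treeSet (s : ℕ → ℕ) : Set PlaneTree := {t | ∀ i, ecd t i = s i}

/-- strict depth-first (preorder) order on positions -/
def dfLT (p q : List ℕ) : Prop := List.Lex (· < ·) p q

def parent (p : List ℕ) : List ℕ := p.dropLast

/-- `q` is a strict ancestor of `p`, i.e. `q ∈ [ρ, p)` -/
def StrictAnc (q p : List ℕ) : Prop := q <+: p ∧ q ≠ p

/-- admissible (ordered) pair of leaves -/
def Admissible (t : PlaneTree) (u v : List ℕ) : Prop :=
  IsLeaf t u ∧ IsLeaf t v ∧ 2 ≤ v.length ∧
    StrictAnc (parent (parent v)) (parent u) ∧ dfLT (parent u) (parent v)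

def ASet (t : PlaneTree) : Set (List ℕ × List ℕ) := {uv | Admissible t uv.1 uv.2}

def fA (t : PlaneTree) (u : List ℕ) : Set (List ℕ) := {v | Admissible t u v}

def B2 (t : PlaneTree) (u : List ℕ) : Set (List ℕ) :=
  {v | IsVertex t v ∧ 2 ≤ v.length ∧ StrictAnc (parent (parent v)) u}

noncomputable def leafFinset (t : PlaneTree) : Finset (List ℕ) :=
  ((pos t).toFinset).filter fun p => IsLeaf t p

def leafOf {k : ℕ} (w : Fin k → List ℕ × List ℕ) (y : Fin k × Bool) : List ℕ :=
  if y.2 then (w y.1).1 else (w y.1).2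

/-- ordered `k`-tuples of admissible pairs using `2k` distinct leaves -/
def AkOrd (t : PlaneTree) (k : ℕ) : Set (Fin k → List ℕ × List ℕ) :=
  {w | (∀ a, Admissible t (w a).1 (w a).2) ∧ Function.Injective (leafOf w)}

/-- unordered collections of `k` admissible pairs using `2k` distinct leaves -/
def Ak (t : PlaneTree) (k : ℕ) : Set (Finset (List ℕ × List ℕ)) :=
  {x | x.card = k ∧ (∀ uv ∈ x, Admissible t uv.1 uv.2) ∧
    Set.InjOn (fun y : (List ℕ × List ℕ) × Bool => if y.2 then y.1.1 else y.1.2)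
      {y | y.1 ∈ x}}

/-- the set `T_s^(k)` of pairs of a plane tree with ECD `s` and a set of `k` admissible pairs -/
def Tsk (s : ℕ → ℕ) (k : ℕ) : Set (PlaneTree × Finset (List ℕ × List ℕ)) :=
  {tx | (∀ i, ecd tx.1 i = s i) ∧ tx.2 ∈ Ak tx.1 k}

end PlaneTree

/-- labeled plane trees -/
inductive LTree : Type
  | node : ℕ → List LTree → LTree

namespace LTree

mutual
  def shape : LTree → PlaneTree
    | node _ ts => .node (shapeF ts)
  def shapeF : List LTree → List PlaneTree
    | [] => []
    | t :: ts => shape t :: shapeF ts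
end

mutual
  def dfsLab : LTree → List ℕ
    | node a ts => a :: dfsLabF ts
  def dfsLabF : List LTree → List ℕ
    | [] => []
    | t :: ts => dfsLab t ++ dfsLabF ts
end

mutual
  def dfsDeg : LTree → List ℕ
    | node _ ts => ts.length :: dfsDegF ts
  def dfsDegF : List LTree → List ℕ
    | [] => []
    | t :: ts => dfsDeg t ++ dfsDegF ts
end

def subtreeAt : LTree → List ℕ → Option LTree
  | t, [] => some t
  | node _ ts, i :: p =>
    match ts[i]? with
    | some t' => subtreeAt t' p
    | none => none

def labelAt (t : LTree) (p : List ℕ) : ℕ :=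
  ((subtreeAt t p).map fun u => match u with | node a _ => a).getD 0

end LTree

/-- partial-sum steps of the permuted walk -/
def steps {m : ℕ} (c : Fin m → ℕ) (π : Equiv.Perm (Fin m)) : List ℤ :=
  List.ofFn fun i => (c (π i) : ℤ) - 1

/-- first index `j ∈ [1, length]` at which the partial sums attain their minimum -/
noncomputable def firstMinIdx (l : List ℤ) : ℕ :=
  WithTop.untopD 0 ((Finset.Icc 1 l.length).filter fun j =>
      ∀ j' ∈ Finset.Icc 1 l.length, (l.take j).sum ≤ (l.take j').sum).min

/-- the DFS vertex sequence obtained by rotating the uniformly permuted vertex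
sequence at the first minimum of its Łukasiewicz-type walk (Vervaat transform) -/
noncomputable def rotSeq {m : ℕ} (c : Fin m → ℕ) (π : Equiv.Perm (Fin m)) : List (Fin m) :=
  (List.ofFn fun i => π i).rotate (firstMinIdx (steps c π))

/-- the degree of a vertex in a (simple) edge set -/
def degIn (E : Finset (Sym2 ℕ)) (v : ℕ) : ℕ := (E.filter fun e => v ∈ e).card

/-- degree of a vertex in a multigraph given by an edge multiset (loops count twice) -/
def mdeg (E : Multiset (Sym2 ℕ)) (v : ℕ) : ℕ :=
  (E.map fun e => (if v ∈ e then 1 else 0) + (if e = s(v, v) then 1 else 0)).sum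

/-- connectivity of a (multi)graph on vertex set `V` with edges `E` -/
def ConnOn (V : Finset ℕ) (E : Set (Sym2 ℕ)) : Prop :=
  ∀ a ∈ V, ∀ b ∈ V, Relation.ReflTransGen (fun a b => s(a, b) ∈ E) a b

/-- the set of simple connected labeled graphs on `{1, …, m}` with degree sequence `d` -/
def GconSet (m : ℕ) (d : ℕ → ℕ) : Set (Finset (Sym2 ℕ)) :=
  {E | (∀ e ∈ E, ¬ e.IsDiag) ∧ (∀ e ∈ E, ∀ v ∈ e, v ∈ Finset.Icc 1 m) ∧
       (∀ v ∈ Finset.Icc 1 m, degIn E v = d v) ∧ ConnOn (Finset.Icc 1 m) (E : Set (Sym2 ℕ))}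

/-- ECD of the children sequence `(d̃₂ − 1, …, d̃_{m̃} − 1, 0, …, 0)` (with `2k` zeros) -/
def ecdFromDeg (m k : ℕ) (d : ℕ → ℕ) (i : ℕ) : ℕ :=
  ((Finset.Icc 2 m).filter fun j => d j = i + 1).card + if i = 0 then 2 * k else 0

/-- `≪` order on admissible pairs -/
def pairLT (a b : List ℕ × List ℕ) : Prop :=
  PlaneTree.dfLT (PlaneTree.parent a.1) (PlaneTree.parent b.1) ∨
    (PlaneTree.parent a.1 = PlaneTree.parent b.1 ∧
      PlaneTree.dfLT (PlaneTree.parent a.2) (PlaneTree.parent b.2))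

/-- labeled elements of `T_s^(k)` as in the sampling algorithm: a labeled plane tree whose
labels are `{2, …, m̃ + 2k}`, in which the vertex labeled `j ≤ m̃` has `d̃_j − 1` children and
the vertices labeled `> m̃` are leaves, together with a `≪`-increasing tuple of `k` admissible
pairs of leaves with distinct leaves, the `j`-th pair carrying labels `(m̃+2j−1, m̃+2j)`. -/
def IsLabeledElement (m k : ℕ) (d : ℕ → ℕ) (t : LTree)
    (x : Fin k → List ℕ × List ℕ) : Prop :=
  (LTree.dfsLab t).Perm (List.range' 2 (m - 1 + 2 * k)) ∧
  (∀ p ∈ PlaneTree.pos (LTree.shape t),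
    PlaneTree.numChild (LTree.shape t) p =
      (if 2 ≤ LTree.labelAt t p ∧ LTree.labelAt t p ≤ m then d (LTree.labelAt t p) - 1 else 0)) ∧
  (∀ j, PlaneTree.Admissible (LTree.shape t) (x j).1 (x j).2) ∧
  Function.Injective (PlaneTree.leafOf x) ∧
  (∀ j j' : Fin k, j < j' → pairLT (x j) (x j')) ∧
  (∀ j : Fin k, LTree.labelAt t (x j).1 = m + 2 * (j : ℕ) + 1 ∧
      LTree.labelAt t (x j).2 = m + 2 * (j : ℕ) + 2)

/-- the edge multiset of the graph `I(t, x)`: tree edges, with the leaves of the admissible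
pairs deleted and an edge joining the two parents of each admissible pair added -/
noncomputable def Iedges (t : LTree) {k : ℕ} (x : Fin k → List ℕ × List ℕ) :
    Multiset (Sym2 ℕ) :=
  (↑(((PlaneTree.pos (LTree.shape t)).filter fun p =>
        decide (p ≠ ([] : List ℕ) ∧ ∀ j, p ≠ (x j).1 ∧ p ≠ (x j).2)).map
      fun p => s(LTree.labelAt t (PlaneTree.parent p), LTree.labelAt t p)) : Multiset (Sym2 ℕ))
  + ↑(List.ofFn fun j =>
      s(LTree.labelAt t (PlaneTree.parent (x j).1), LTree.labelAt t (PlaneTree.parent (x j).2)))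

/- Brownian excursion: Gaussian/Bessel kernels and finite-dimensional densities -/
noncomputable def gaussD (s x : ℝ) : ℝ := Real.exp (-(x ^ 2) / (2 * s)) / Real.sqrt (2 * Real.pi * s)

noncomputable def killedK (s x y : ℝ) : ℝ := gaussD s (y - x) - gaussD s (y + x)

noncomputable def bes3K (s x y : ℝ) : ℝ := (y / x) * killedK s x y

noncomputable def exStart (t x : ℝ) : ℝ :=
  Real.sqrt (2 / Real.pi) * x ^ 2 * t ^ (-(3 : ℝ) / 2) * Real.exp (-(x ^ 2) / (2 * t))

noncomputable def exEnd (s x : ℝ) : ℝ := (2 / s) * gaussD s x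

/-- finite-dimensional density of the standard Brownian excursion at times `t 0 < … < t n` -/
noncomputable def exFdd {n : ℕ} (t : Fin (n + 1) → ℝ) (x : Fin (n + 1) → ℝ) : ℝ :=
  if ∀ i, 0 < x i then
    Real.sqrt (Real.pi / 2) * exStart (t 0) (x 0) *
      (∏ i : Fin n, bes3K (t i.succ - t i.castSucc) (x i.castSucc) (x i.succ)) *
      exEnd (1 - t (Fin.last n)) (x (Fin.last n))
  else 0

/-- `e` is a standard Brownian excursion on `[0,1]`: continuous nonnegative paths vanishing at
the endpoints, positive inside, with the excursion finite-dimensional densities. -/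
def IsStdBrownianExcursion {Ω : Type*} [MeasureSpace Ω] (e : Ω → ℝ → ℝ) : Prop :=
  (∀ ω, Continuous (e ω)) ∧ (∀ ω, e ω 0 = 0) ∧ (∀ ω, e ω 1 = 0) ∧
  (∀ ω, ∀ x ∈ Set.Ioo (0 : ℝ) 1, 0 < e ω x) ∧
  (∀ t : ℝ, Measurable fun ω => e ω t) ∧
  ∀ (n : ℕ) (t : Fin (n + 1) → ℝ), StrictMono t → 0 < t 0 → t (Fin.last n) < 1 →
    Measure.map (fun ω i => e ω (t i)) (volume : Measure Ω)
      = volume.withDensity fun x => ENNReal.ofReal (exFdd t x)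

/-- `j`-th smallest value (0-based) among `ω 0, …, ω (m−1)` -/
noncomputable def orderStat {m : ℕ} (ω : Fin m → ℝ) (j : ℕ) : ℝ :=
  ((Multiset.map ω Finset.univ.val).sort (· ≤ ·)).getD j 0

end Paper

/-!
Deleting the first root of a forest and promoting its `d` children to roots is a bijection from
the forests with ECD `s` whose first root has `d` children onto the forests with ECD `s - e_d`
(one vertex of degree `d` fewer), which have `m - 1` vertices and `z - 1 + d` roots. Hence
`N(s) := #F(s) · ∏ sᵢ!` satisfies `N(s) = ∑_d s_d N(s - e_d)`, and `z (m - 1)!` satisfies the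
same recursion because `∑_d s_d (z - 1 + d) = z (m - 1)`. That the number of roots is determined
by `s` is the Łukasiewicz identity: in the preorder degree sequence of a forest, the degrees add
up to the number of vertices minus the number of trees.
-/

namespace Paper.PlaneTree

open Finset Function Nat

mutual
theorem map_numChild_pos : ∀ t : PlaneTree, (pos t).map (numChild t) = dfsDeg t
  | node ts => by
    rw [pos, dfsDeg, List.map_cons]
    exact congrArg _ (map_numChild_posF [] ts)
-- `posF n ts` lists positions inside a node whose first `n` children precede `ts`.
theorem map_numChild_posF : ∀ pre ts : List PlaneTree,
    (posF pre.length ts).map (numChild (node (pre ++ ts))) = dfsDegF ts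
  | _, [] => rfl
  | pre, t :: ts => by
    have hchild : ∀ q, numChild (node (pre ++ t :: ts)) (pre.length :: q) = numChild t q := by
      intro q
      simp [numChild, subtreeAt]
    have hrest := map_numChild_posF (pre ++ [t]) ts
    simp only [List.length_append, List.length_singleton, List.append_assoc,
      List.singleton_append] at hrest
    rw [posF, dfsDegF, List.map_append, List.map_map, ← map_numChild_pos t, hrest]
    exact congrArg (· ++ _) (List.map_congr_left fun q _ => hchild q)
end

theorem ecd_eq_count (t : PlaneTree) (i : ℕ) : ecd t i = (dfsDeg t).count i := by
  rw [ecd, ← map_numChild_pos, List.count, List.countP_map, List.countP_eq_length_filter]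
  rfl

theorem ecdF_eq_count (f : List PlaneTree) (i : ℕ) : ecdF f i = (dfsDegF f).count i := by
  induction f with
  | nil => rfl
  | cons t f ih => simp [ecdF, dfsDegF, List.count_append, ecd_eq_count, ← ih]

theorem dfsDegF_append (f g : List PlaneTree) : dfsDegF (f ++ g) = dfsDegF f ++ dfsDegF g := by
  induction f with
  | nil => rfl
  | cons t f ih => simp [dfsDegF, ih]

theorem dfsDegF_node_cons (cs rest : List PlaneTree) :
    dfsDegF (node cs :: rest) = cs.length :: dfsDegF (cs ++ rest) := by
  rw [dfsDegF, dfsDeg, dfsDegF_append, List.cons_append]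

theorem sum_dfsDegF_add_length : ∀ f : List PlaneTree,
    (dfsDegF f).sum + f.length = (dfsDegF f).length
  | [] => rfl
  | node cs :: rest => by
    have := sum_dfsDegF_add_length (cs ++ rest)
    rw [dfsDegF_node_cons, List.sum_cons, List.length_cons, List.length_cons]
    rw [List.length_append] at this
    omega
termination_by f => (dfsDegF f).length
decreasing_by simp [dfsDegF_node_cons]

theorem mem_forestSet_iff_count {s : ℕ → ℕ} {f : List PlaneTree} :
    f ∈ forestSet s ↔ ∀ i, (dfsDegF f).count i = s i := by
  simp only [forestSet, Set.mem_ofPred_eq, ecdF_eq_count]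

theorem forestSet_zero : forestSet 0 = {[]} := by
  ext f
  simp only [mem_forestSet_iff_count, Pi.zero_apply, List.count_eq_zero, Set.mem_singleton_iff]
  constructor
  · intro h
    have hlen := sum_dfsDegF_add_length f
    rw [List.eq_nil_iff_forall_not_mem.mpr h] at hlen
    exact List.eq_nil_of_length_eq_zero (by simpa using hlen)
  · rintro rfl i
    simp [dfsDegF]

theorem node_cons_mem_forestSet_iff {s : ℕ → ℕ} {cs rest : List PlaneTree} :
    node cs :: rest ∈ forestSet s ↔
      s cs.length ≠ 0 ∧ cs ++ rest ∈ forestSet (update s cs.length (s cs.length - 1)) := by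
  simp only [mem_forestSet_iff_count, dfsDegF_node_cons, List.count_cons, beq_iff_eq]
  constructor
  · intro h
    refine ⟨by have := h cs.length; simp at this; omega, fun i => ?_⟩
    rcases eq_or_ne i cs.length with rfl | hi
    · have := h cs.length
      simp only [update_self, if_true] at this ⊢
      omega
    · simpa [hi, Ne.symm hi] using h i
  · rintro ⟨hs, h⟩ i
    rw [h i]
    rcases eq_or_ne i cs.length with rfl | hi
    · simp only [update_self, if_true]
      omega
    · simp [hi, Ne.symm hi]

section UpdatePred

variable {S : Finset ℕ} {s : ℕ → ℕ} {d : ℕ}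

theorem sum_update_pred_add_one (hd : d ∈ S) (hs : s d ≠ 0) :
    ∑ i ∈ S, update s d (s d - 1) i + 1 = ∑ i ∈ S, s i := by
  rw [sum_update_of_mem hd, sum_eq_add_sum_sdiff_singleton_of_mem hd]
  omega

theorem sum_mul_update_pred_add (hd : d ∈ S) (hs : s d ≠ 0) :
    ∑ i ∈ S, i * update s d (s d - 1) i + d = ∑ i ∈ S, i * s i := by
  have := sum_update_of_mem hd (fun i => i * s i) (d * (s d - 1))
  rw [← sum_congr rfl fun i _ => apply_update (fun i n => i * n) s d (s d - 1) i] at this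
  rw [this, sum_eq_add_sum_sdiff_singleton_of_mem hd (fun i => i * s i)]
  obtain ⟨k, hk⟩ := Nat.exists_eq_succ_of_ne_zero hs
  simp only [hk, Nat.succ_sub_one, Nat.mul_succ]
  omega

theorem mul_prod_factorial_update_pred (hd : d ∈ S) (hs : s d ≠ 0) :
    s d * ∏ i ∈ S, (update s d (s d - 1) i)! = ∏ i ∈ S, (s i)! := by
  have := prod_update_of_mem hd (fun i => (s i)!) (s d - 1)!
  rw [← prod_congr rfl fun i _ => apply_update (fun _ n => n !) s d (s d - 1) i] at this
  rw [this, prod_eq_mul_prod_sdiff_singleton_of_mem hd (fun i => (s i)!), ← mul_assoc,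
    Nat.mul_factorial_pred hs]

end UpdatePred

def graft (d : ℕ) (g : List PlaneTree) : List PlaneTree := node (g.take d) :: g.drop d

theorem graft_injective (d : ℕ) : Injective (graft d) := by
  intro g g' h
  simp only [graft, List.cons.injEq, node.injEq] at h
  rw [← List.take_append_drop d g, h.1, h.2, List.take_append_drop]

theorem rootDeg_graft {d : ℕ} {g : List PlaneTree} (h : d ≤ g.length) :
    rootDeg (graft d g) 0 = d := by
  simp [rootDeg, graft, deg, h]

theorem graft_mem_forestSet_iff {s : ℕ → ℕ} {d : ℕ} {g : List PlaneTree} (h : d ≤ g.length) :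
    graft d g ∈ forestSet s ↔ s d ≠ 0 ∧ g ∈ forestSet (update s d (s d - 1)) := by
  rw [graft, node_cons_mem_forestSet_iff, List.take_append_drop, List.length_take,
    min_eq_left h]

structure IsECD (s : ℕ → ℕ) (M z m : ℕ) : Prop where
  support : ∀ i, M ≤ i → s i = 0
  card : m = ∑ i ∈ range M, s i
  roots : m = z + ∑ i ∈ range M, i * s i

namespace IsECD

variable {s : ℕ → ℕ} {M z m : ℕ}

theorem length_of_mem_forestSet (h : IsECD s M z m) {f : List PlaneTree}
    (hf : f ∈ forestSet s) : f.length = z := by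
  have hcount := mem_forestSet_iff_count.mp hf
  have hsub : (dfsDegF f).toFinset ⊆ range M := by
    intro i hi
    rw [List.mem_toFinset, ← List.count_pos_iff, hcount] at hi
    by_contra hiM
    exact hi.ne' (h.support i (by simpa using hiM))
  have hlen : (dfsDegF f).length = m := by
    rw [h.card, ← Multiset.coe_card, ← Multiset.sum_count_eq_card (s := range M)]
    · simp [hcount]
    · simpa using fun i hi => hsub (List.mem_toFinset.mpr hi)
  have hsum : (dfsDegF f).sum = ∑ i ∈ range M, i * s i := by
    rw [sum_list_count_of_subset _ _ hsub]
    simp [hcount, mul_comm]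
  have := sum_dfsDegF_add_length f
  have := h.roots
  omega

theorem update_pred (h : IsECD s M z m) (hz : 1 ≤ z) {d : ℕ} (hd : d < M) (hs : s d ≠ 0) :
    IsECD (update s d (s d - 1)) M (z - 1 + d) (m - 1) where
  support i hi := by rw [update_of_ne (by omega), h.support i hi]
  card := by
    have := sum_update_pred_add_one (mem_range.mpr hd) hs
    have := h.card
    omega
  roots := by
    have := sum_mul_update_pred_add (mem_range.mpr hd) hs
    have := h.roots
    omega

theorem forestSet_eq_biUnion (h : IsECD s M z m) (hz : 1 ≤ z) :
    forestSet s = ⋃ d ∈ (↑((range M).filter (s · ≠ 0)) : Set ℕ),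
      graft d '' forestSet (update s d (s d - 1)) := by
  ext f
  simp only [Set.mem_iUnion, Set.mem_image, coe_filter, mem_range, Set.mem_ofPred_eq,
    exists_prop]
  constructor
  · intro hf
    obtain ⟨⟨cs⟩, rest, rfl⟩ : ∃ t rest, f = t :: rest :=
      List.exists_cons_of_length_pos (by rw [h.length_of_mem_forestSet hf]; omega)
    obtain ⟨hs, hrest⟩ := node_cons_mem_forestSet_iff.mp hf
    refine ⟨cs.length, ⟨lt_of_not_ge fun hM => hs (h.support _ hM), hs⟩, cs ++ rest, hrest, ?_⟩
    simp [graft]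
  · rintro ⟨d, ⟨hd, hs⟩, g, hg, rfl⟩
    have := (h.update_pred hz hd hs).length_of_mem_forestSet hg
    exact (graft_mem_forestSet_iff (by omega)).mpr ⟨hs, hg⟩

theorem encard_forestSet_eq_sum (h : IsECD s M z m) (hz : 1 ≤ z) :
    (forestSet s).encard =
      ∑ d ∈ (range M).filter (s · ≠ 0), (forestSet (update s d (s d - 1))).encard := by
  rw [h.forestSet_eq_biUnion hz, (finite_toSet _).encard_biUnion, finsum_mem_coe_finset]
  · exact sum_congr rfl fun d _ => (graft_injective d).encard_image _
  · intro d hd d' hd' hne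
    simp only [coe_filter, mem_range, Set.mem_ofPred_eq] at hd hd'
    refine Set.disjoint_left.mpr ?_
    rintro _ ⟨g, hg, rfl⟩ ⟨g', hg', heq⟩
    have := (h.update_pred hz hd.1 hd.2).length_of_mem_forestSet hg
    have := (h.update_pred hz hd'.1 hd'.2).length_of_mem_forestSet hg'
    have hroot := congrArg (rootDeg · 0) heq
    simp only [rootDeg_graft (by omega : d ≤ g.length),
      rootDeg_graft (by omega : d' ≤ g'.length)] at hroot
    exact hne hroot.symm

theorem sum_mul_pred_add (h : IsECD s M z m) (hz : 1 ≤ z) :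
    ∑ d ∈ range M, s d * (z - 1 + d) = z * (m - 1) := by
  obtain ⟨w, rfl⟩ := Nat.exists_eq_add_of_le' hz
  calc ∑ d ∈ range M, s d * (w + 1 - 1 + d)
      = (∑ d ∈ range M, s d) * w + ∑ d ∈ range M, d * s d := by
        rw [Nat.add_sub_cancel, sum_mul, ← sum_add_distrib]
        exact sum_congr rfl fun d _ => by ring
    _ = (w + 1) * (m - 1) := by
        rw [← h.card, h.roots, show w + 1 + ∑ i ∈ range M, i * s i - 1 =
          w + ∑ i ∈ range M, i * s i by omega]
        ring

theorem eq_zero (h : IsECD s M z 0) : s = 0 := by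
  funext i
  by_cases hi : i < M
  · exact sum_eq_zero_iff.mp h.card.symm i (mem_range.mpr hi)
  · exact h.support i (not_lt.mp hi)

theorem forestSet_eq_empty (h : IsECD s M 0 m) (hm : 1 ≤ m) : forestSet s = ∅ := by
  refine Set.eq_empty_of_forall_notMem fun f hf => ?_
  obtain rfl := List.eq_nil_of_length_eq_zero (h.length_of_mem_forestSet hf)
  have hs : ∀ i, s i = 0 := fun i => (hf i).symm
  have := h.card
  simp only [hs, sum_const_zero] at this
  omega

theorem encard_forestSet_mul_prod_eq_sum (h : IsECD s M z m) (hz : 1 ≤ z) :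
    (forestSet s).encard * ↑(∏ i ∈ range M, (s i)!) =
      ∑ d ∈ (range M).filter (s · ≠ 0), ↑(s d) * ((forestSet (update s d (s d - 1))).encard *
        ↑(∏ i ∈ range M, (update s d (s d - 1) i)!)) := by
  rw [h.encard_forestSet_eq_sum hz, sum_mul]
  refine sum_congr rfl fun d hd => ?_
  obtain ⟨hdM, hs⟩ := mem_filter.mp hd
  rw [← mul_prod_factorial_update_pred hdM hs]
  push_cast
  ring

-- Counting with `encard` lets the decomposition be used without first proving that
-- `forestSet s` is finite.
theorem encard_forestSet_mul_prod_factorial (h : IsECD s M z m) (hm : 1 ≤ m) :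
    (forestSet s).encard * ↑(∏ i ∈ range M, (s i)!) = ↑(z * (m - 1)!) := by
  induction m using Nat.strong_induction_on generalizing s z with
  | _ m ih =>
  rcases Nat.eq_zero_or_pos z with rfl | hz
  · simp [h.forestSet_eq_empty hm]
  have hrem : ∀ d ∈ (range M).filter (s · ≠ 0),
      IsECD (update s d (s d - 1)) M (z - 1 + d) (m - 1) := fun d hd =>
    h.update_pred hz (mem_range.mp (mem_filter.mp hd).1) (mem_filter.mp hd).2
  rw [h.encard_forestSet_mul_prod_eq_sum hz]
  rcases hm.eq_or_lt with rfl | hm2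
  · obtain rfl : z = 1 := by have := h.roots; omega
    rw [sum_congr rfl fun d hd => by rw [(hrem d hd).eq_zero, forestSet_zero]]
    simp only [Set.encard_singleton, Pi.zero_apply, factorial_zero, prod_const_one,
      Nat.cast_one, mul_one]
    rw [← Nat.cast_sum, sum_filter_ne_zero, ← h.card]
    rfl
  · have hterm : ∀ d ∈ (range M).filter (s · ≠ 0),
        ↑(s d) * ((forestSet (update s d (s d - 1))).encard *
          ↑(∏ i ∈ range M, (update s d (s d - 1) i)!)) =
        ((s d * (z - 1 + d) * (m - 2)! : ℕ) : ℕ∞) := by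
      intro d hd
      rw [ih (m - 1) (by omega) (hrem d hd) (by omega), show m - 1 - 1 = m - 2 by omega]
      push_cast
      ring
    rw [sum_congr rfl hterm, ← Nat.cast_sum,
      sum_filter_of_ne fun d _ hd => left_ne_zero_of_mul (left_ne_zero_of_mul hd), ← sum_mul,
      h.sum_mul_pred_add hz, mul_assoc, show m - 1 = m - 2 + 1 by omega, Nat.factorial_succ,
      show m - 2 + 1 = m - 1 by omega]

end IsECD

end Paper.PlaneTree

open Paper Paper.PlaneTree in
/-- the number of plane forests with ranked roots having ECD `s`
equals `z (m−1)! / ∏ s_i!`. -/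
theorem number_of_plane_forests_with_ranked_roots
    (s : ℕ → ℕ) (M z m : ℕ)
    (hsupp : ∀ i, M ≤ i → s i = 0)
    (hm : m = ∑ i ∈ Finset.range M, s i)
    (hz : m = z + ∑ i ∈ Finset.range M, i * s i)
    (hz1 : 1 ≤ z) :
    (forestSet s).ncard * (∏ i ∈ Finset.range M, Nat.factorial (s i))
      = z * Nat.factorial (m - 1) := by
  have h : IsECD s M z m := ⟨hsupp, hm, hz⟩
  have := congrArg ENat.toNat (h.encard_forestSet_mul_prod_factorial (by omega))
  rwa [ENat.toNat_mul, ENat.toNat_natCast, ENat.toNat_natCast, ← Set.ncard_def] at this
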